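/- arXiv:2006.03417 — 2 statements merged into one kernel-verified Lean document; each statement's English description precedes it below -/
import Mathlib

section
/- Let L = (L_k) be a formal functional from C^∞(ℝ^n) to C^∞(ℝ^m) which is a non-linear homomorphism with support map K_0, and set S_0 = L_0 (the affine component, the value of L at g = 0). Then L coincides up to order 1 with the functional g ↦ S_0(x) + g(K_0(x)); that is, the order-1 component satisfies L_1(g)(x) = g(K_0(x)) for every g ∈ C^∞(ℝ^n) and every x ∈ ℝ^m. -/
open scoped BigOperators

namespace ThickMorphism

/-- Real-valued functions on `ℝ^n` (the ambient space of `C^∞(ℝ^n)`). -/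
abbrev Fn (n : ℕ) : Type := (Fin n → ℝ) → ℝ

/-- `ℝ^n`-valued functions on `ℝ^m`. -/
abbrev VFn (m n : ℕ) : Type := (Fin m → ℝ) → Fin n → ℝ

/-- `f` is a smooth (`C^∞`) function on `ℝ^n`. -/
def Sm {n : ℕ} (f : Fn n) : Prop := ContDiff ℝ (⊤ : ℕ∞) f

/-- `f` is a smooth (`C^∞`) map from `ℝ^m` to `ℝ^n`. -/
def SmV {m n : ℕ} (f : VFn m n) : Prop := ContDiff ℝ (⊤ : ℕ∞) f

/-- The partial derivative `∂_b g`. -/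
noncomputable def pd {n : ℕ} (b : Fin n) (g : Fn n) : Fn n :=
  fun y => fderiv ℝ g y (Pi.single b 1)

/-- The `a`-th coordinate function `y^a` on `ℝ^n`. -/
def coordFn {n : ℕ} (a : Fin n) : Fn n := fun y => y a

/-- Ordered tuples of `j` positive parts summing to `k` (parts coded in `Fin (k+1)`). -/
def parts (j k : ℕ) : Finset (Fin j → Fin (k + 1)) :=
  Finset.univ.filter fun t => (∑ i, (t i : ℕ)) = k ∧ ∀ i, 0 < (t i : ℕ)

/-- Order-`k` component of the Taylor expansion (at `Y 0`) of `h ∘ Y`,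
where `Y r` is the order-`r` component of a formal map with values in `ℝ^n`:
`Σ_{j} Σ_{r_1+⋯+r_j = k, r_i ≥ 1} (1/j!) ∂^j h (Y 0 x) (Y_{r_1}(x),…,Y_{r_j}(x))`. -/
noncomputable def taylorComp {m n : ℕ} (h : Fn n) (Y : ℕ → VFn m n) (k : ℕ) : Fn m :=
  fun x => ∑ j ∈ Finset.range (k + 1), ∑ t ∈ parts j k,
    ((Nat.factorial j : ℝ))⁻¹ * iteratedFDeriv ℝ j h (Y 0 x) (fun i => Y (t i : ℕ) x)

/-- A formal functional from `C^∞(ℝ^n)` to `C^∞(ℝ^m)`: a sequence of symmetric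
`k`-linear maps `B k` (the polarised forms), preserving smoothness; the order-`k`
component of the functional is the diagonal restriction `g ↦ B k (g,…,g)`. -/
structure FormalFunctional (n m : ℕ) where
  B : (k : ℕ) → MultilinearMap ℝ (fun _ : Fin k => Fn n) (Fn m)
  symm : ∀ (k : ℕ) (σ : Equiv.Perm (Fin k)) (v : Fin k → Fn n), B k (v ∘ σ) = B k v
  smooth : ∀ (k : ℕ) (v : Fin k → Fn n), (∀ i, Sm (v i)) → Sm (B k v)

/-- The order-`k` component `L_k(g)` of a formal functional. -/
def FormalFunctional.ord {n m : ℕ} (L : FormalFunctional n m) (k : ℕ) (g : Fn n) : Fn m :=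
  L.B k (fun _ => g)

/-- A formal map over `C^∞(ℝ^n)` with values in `ℝ^n`-valued functions on `ℝ^m`:
a sequence of symmetric `r`-linear maps `K r`; the order-`r` component at `g`
is the diagonal restriction. -/
structure FormalMap (n m : ℕ) where
  K : (r : ℕ) → MultilinearMap ℝ (fun _ : Fin r => Fn n) (VFn m n)
  symm : ∀ (r : ℕ) (σ : Equiv.Perm (Fin r)) (v : Fin r → Fn n), K r (v ∘ σ) = K r v
  smooth : ∀ (r : ℕ) (v : Fin r → Fn n), (∀ i, Sm (v i)) → SmV (K r v)

/-- The order-`r` component `K_r(g)` of a formal map. -/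
def FormalMap.ord {n m : ℕ} (K : FormalMap n m) (r : ℕ) (g : Fn n) : VFn m n :=
  K.K r (fun _ => g)

/-- The support map `K₀` of a formal map. -/
def FormalMap.supp {n m : ℕ} (K : FormalMap n m) : VFn m n :=
  K.K 0 (fun i => i.elim0)

/-- `L` is a non-linear homomorphism with associated formal map `K`: for all smooth
`g, h` and all `k`, the order-`k`-in-`g` component of the differential of `L` at `g`
in direction `h`, namely `(k+1)·B_{k+1}(h,g,…,g)`, equals the order-`k` component
of the formal (Taylor) composition `h(K(g))`. -/
def IsNonlinearHomWith {n m : ℕ} (L : FormalFunctional n m) (K : FormalMap n m) : Prop :=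
  ∀ (g h : Fn n), Sm g → Sm h → ∀ k : ℕ,
    ((k : ℝ) + 1) • L.B (k + 1) (Fin.cons h (fun _ => g)) =
      taylorComp h (fun r => K.ord r g) k

/-- `L` is a non-linear homomorphism. -/
def IsNonlinearHom {n m : ℕ} (L : FormalFunctional n m) : Prop :=
  ∃ K : FormalMap n m, IsNonlinearHomWith L K

/-- A generating function `S(x,q) = Σ_k S_k^{a_1…a_k}(x) q_{a_1}⋯q_{a_k}` of a thick
morphism `ℝ^m ⇛ ℝ^n`: smooth symmetric tensors `S k x : (Fin k → Fin n) → ℝ`. -/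
structure GenFn (m n : ℕ) where
  S : (k : ℕ) → (Fin m → ℝ) → (Fin k → Fin n) → ℝ
  symm : ∀ (k : ℕ) (σ : Equiv.Perm (Fin k)) (x : Fin m → ℝ) (a : Fin k → Fin n),
    S k x (a ∘ σ) = S k x a
  smooth : ∀ (k : ℕ) (a : Fin k → Fin n), Sm (fun x => S k x a)

/-- The first-order coefficient `S_1` of a generating function, as a map `ℝ^m → ℝ^n`. -/
def sOne {m n : ℕ} (S : GenFn m n) : VFn m n := fun x a => S.S 1 x (fun _ => a)

/-- Order-`t`-in-`g` component (`t ≥ 1`) of `q_b = (∂_b g)(y(x,g))`, the formal map `y`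
having components `Y`: it is the Taylor-composition component of order `t-1`. -/
noncomputable def qComp {m n : ℕ} (g : Fn n) (Y : ℕ → VFn m n) (b : Fin n) (t : ℕ) : Fn m :=
  taylorComp (pd b g) Y (t - 1)

/-- Order-`N`-in-`g` component of `∂S(x,q)/∂q_a` evaluated at `q_b = (∂_b g)(y(x,g))`,
where `y` has components `Y`. -/
noncomputable def dSComp {m n : ℕ} (S : GenFn m n) (g : Fn n) (Y : ℕ → VFn m n) (N : ℕ) :
    VFn m n :=
  fun x a => ∑ j ∈ Finset.range (N + 1), ∑ b : Fin j → Fin n, ∑ t ∈ parts j N,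
    ((j : ℝ) + 1) * S.S (j + 1) x (Fin.cons a b) * ∏ i, qComp g Y (b i) (t i : ℕ) x

/-- Auxiliary recursion: `thickYAux S g k r` is the order-`r` component `y_r(x,g)` of the
formal map of the thick morphism `Φ_S` for `r ≤ k` (and `0` for `r > k`). -/
noncomputable def thickYAux {m n : ℕ} (S : GenFn m n) (g : Fn n) : ℕ → ℕ → VFn m n
  | 0 => fun r => if r = 0 then (fun x a => S.S 1 x (fun _ => a)) else 0
  | k + 1 => fun r =>
      if r = k + 1 then dSComp S g (thickYAux S g k) (k + 1) else thickYAux S g k r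

/-- The order-`k` component `y_k(x,g)` of the formal map of the thick morphism `Φ_S`:
`y_0 = S_1`, and `y_{k+1}` is the order-`(k+1)`-in-`g` component of `∂S/∂q_a` at
`q = (∂g)(y_{≤k}(x,g))`. -/
noncomputable def thickY {m n : ℕ} (S : GenFn m n) (g : Fn n) (k : ℕ) : VFn m n :=
  thickYAux S g k k

/-- Order-`k`-in-`g` component of `S(x,q)` evaluated at `q = (∂g)(y(x,g))`. -/
noncomputable def SqComp {m n : ℕ} (S : GenFn m n) (g : Fn n) (k : ℕ) : Fn m :=
  fun x => ∑ j ∈ Finset.range (k + 1), ∑ b : Fin j → Fin n, ∑ t ∈ parts j k,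
    S.S j x b * ∏ i, qComp g (thickY S g) (b i) (t i : ℕ) x

/-- Order-`k`-in-`g` component of `y^a q_a` at `y = y(x,g)`, `q = (∂g)(y(x,g))`. -/
noncomputable def yqComp {m n : ℕ} (S : GenFn m n) (g : Fn n) (k : ℕ) : Fn m :=
  fun x => ∑ a : Fin n, ∑ t ∈ Finset.Icc 1 k,
    thickY S g (k - t) x a * qComp g (thickY S g) a t x

/-- The order-`k`-in-`g` component of the thick-morphism pull-back `Φ_S^*(g)`, i.e. of
`g(y) + S(x,q) − y^a q_a` at `y = y(x,g)`, `q = (∂g)(y(x,g))`, all compositions being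
expanded by Taylor series at `y_0 = S_1(x)`. -/
noncomputable def thickPull {m n : ℕ} (S : GenFn m n) (g : Fn n) (k : ℕ) : Fn m :=
  fun x =>
    (if k = 0 then 0 else taylorComp g (thickY S g) (k - 1) x)
      + SqComp S g k x - yqComp S g k x

/-- The coordinate functions are smooth. -/
lemma coordFn_smooth {n : ℕ} (a : Fin n) : Sm (coordFn a) :=
  (ContinuousLinearMap.proj a : (Fin n → ℝ) →L[ℝ] ℝ).contDiff

/-- The generating function `S_L` associated with a formal functional `L`:
`S_k^{a_1…a_k}(x) = B_k(y^{a_1},…,y^{a_k})(x)`, the polarised forms of `L`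
evaluated on the coordinate functions of `ℝ^n`. -/
noncomputable def assocGen {n m : ℕ} (L : FormalFunctional n m) : GenFn m n where
  S := fun k x a => L.B k (fun i => coordFn (a i)) x
  symm := by
    intro k σ x a
    have h := L.symm k σ (fun i => coordFn (a i))
    exact congrFun h x
  smooth := fun k a => L.smooth k _ (fun i => coordFn_smooth (a i))

/-- Truncation of a generating function to degree `≤ k` in `q`. -/
noncomputable def truncGen {m n : ℕ} (S : GenFn m n) (k : ℕ) : GenFn m n where
  S := fun i x a => if i ≤ k then S.S i x a else 0
  symm := by
    intro i σ x a
    by_cases h : i ≤ k <;> simp [h, S.symm]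
  smooth := by
    intro i a
    by_cases h : i ≤ k
    · simpa [Sm, h] using S.smooth i a
    · simpa [Sm, h] using (contDiff_const : ContDiff ℝ (⊤ : ℕ∞) fun _ : Fin m → ℝ => (0 : ℝ))

namespace FormalFunctional

lemma ord_zero_eq {n m : ℕ} (L : FormalFunctional n m) (g g' : Fn n) : L.ord 0 g = L.ord 0 g' :=
  congrArg (L.B 0) (Subsingleton.elim _ _)

lemma B_one_cons {n m : ℕ} (L : FormalFunctional n m) (h g : Fn n) :
    L.B 1 (Fin.cons h fun _ => g) = L.ord 1 h :=
  congrArg (L.B 1) (funext fun i => by fin_cases i; rfl)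

end FormalFunctional

lemma FormalMap.ord_zero {n m : ℕ} (K : FormalMap n m) (g : Fn n) : K.ord 0 g = K.supp :=
  congrArg (K.K 0) (Subsingleton.elim _ _)

lemma parts_zero_zero : parts 0 0 = {Fin.elim0} := by decide

lemma taylorComp_zero {m n : ℕ} (h : Fn n) (Y : ℕ → VFn m n) (x : Fin m → ℝ) :
    taylorComp h Y 0 x = h (Y 0 x) := by
  simp [taylorComp, parts_zero_zero, iteratedFDeriv_zero_apply]

/-- The order-zero case of the homomorphism identity, taken at the base point `g = 0`. -/
lemma IsNonlinearHomWith.ord_one {n m : ℕ} {L : FormalFunctional n m} {K : FormalMap n m}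
    (hLK : IsNonlinearHomWith L K) {h : Fn n} (hh : Sm h) (x : Fin m → ℝ) :
    L.ord 1 h x = h (K.supp x) := by
  have hom := congrFun (hLK 0 h contDiff_const hh 0) x
  rwa [Nat.cast_zero, zero_add, one_smul, L.B_one_cons, taylorComp_zero, K.ord_zero] at hom

/-- Let `L` be a formal functional which is a non-linear homomorphism
with (formal map `K` and) support map `K₀ = K.supp`, and let `S_0 = L_0` be its affine
component (the value of `L` at `g = 0`). Then `L` coincides up to order `1` with
`g ↦ S_0(x) + g(K₀(x))`: the order-`0` component is the constant `L_0` and the order-`1`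
component satisfies `L_1(g)(x) = g(K₀(x))` for every smooth `g` and every `x`. -/
theorem first_order_of_nonlinear_hom {n m : ℕ} (L : FormalFunctional n m)
    (K : FormalMap n m) (hLK : IsNonlinearHomWith L K)
    (g : Fn n) (hg : Sm g) (x : Fin m → ℝ) :
    L.ord 0 g x = L.ord 0 0 x ∧ L.ord 1 g x = g (K.supp x) :=
  ⟨congrFun (L.ord_zero_eq g 0) x, hLK.ord_one hg x⟩

end ThickMorphism
end

section
/- Let L = (L_k) and L̃ = (L̃_k) be two formal functionals from C^∞(ℝ^n) to C^∞(ℝ^m) which are both non-linear homomorphisms, with associated formal maps K = (K_r) and K̃ = (K̃_r) respectively. If L and L̃ coincide up to order k−1 for some k ≥ 2, then their formal maps coincide up to order k−2: K_r(g) = K̃_r(g) for all g ∈ C^∞(ℝ^n) and all r with 0 ≤ r ≤ k−2. -/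
open scoped BigOperators

namespace ThickMorphism

lemma fderiv_coordFn {n : ℕ} (a : Fin n) (y : Fin n → ℝ) :
    fderiv ℝ (coordFn a) y = (ContinuousLinearMap.proj a : (Fin n → ℝ) →L[ℝ] ℝ) :=
  (ContinuousLinearMap.proj a : (Fin n → ℝ) →L[ℝ] ℝ).fderiv

lemma iteratedFDeriv_coordFn_two_le {n : ℕ} (a : Fin n) (j : ℕ) (y : Fin n → ℝ)
    (v : Fin (j + 2) → (Fin n → ℝ)) :
    iteratedFDeriv ℝ (j + 2) (coordFn a) y v = 0 := by
  rw [iteratedFDeriv_succ_apply_right]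
  have h : (fun z : Fin n → ℝ => fderiv ℝ (coordFn a) z)
      = fun _ => (ContinuousLinearMap.proj a : (Fin n → ℝ) →L[ℝ] ℝ) :=
    funext fun z => fderiv_coordFn a z
  rw [h, iteratedFDeriv_const_of_ne (Nat.succ_ne_zero j)]
  simp

lemma parts_one {k : ℕ} (hk : 0 < k) :
    parts 1 k = {fun _ => (⟨k, Nat.lt_succ_self k⟩ : Fin (k + 1))} := by
  ext t
  simp only [parts, Finset.mem_filter, Finset.mem_univ, true_and, Finset.mem_singleton,
    Fin.sum_univ_one]
  constructor
  · rintro ⟨h1, -⟩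
    funext i
    have hi : i = 0 := Subsingleton.elim i 0
    subst hi
    exact Fin.ext h1
  · rintro rfl
    exact ⟨rfl, fun _ => hk⟩

lemma parts_zero_pos {k : ℕ} (hk : 0 < k) : parts 0 k = ∅ := by
  rw [Finset.eq_empty_iff_forall_notMem]
  intro t ht
  simp only [parts, Finset.mem_filter, Finset.mem_univ, true_and] at ht
  have h1 := ht.1
  simp only [Finset.univ_eq_empty, Finset.sum_empty] at h1
  omega

lemma taylorComp_coordFn {m n : ℕ} (a : Fin n) (Y : ℕ → VFn m n) (k : ℕ) (x : Fin m → ℝ) :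
    taylorComp (coordFn a) Y k x = Y k x a := by
  rcases Nat.eq_zero_or_pos k with rfl | hk
  · show ∑ j ∈ Finset.range 1, _ = _
    rw [Finset.sum_range_one]
    have hp : parts 0 0 = Finset.univ := by
      ext t
      simp [parts]
    rw [hp, Fintype.sum_unique]
    simp [coordFn]
  · unfold taylorComp
    rw [Finset.sum_eq_single 1]
    · rw [parts_one hk, Finset.sum_singleton]
      simp [coordFn, fderiv_coordFn]
    · intro j hj hj1
      rcases j with _ | _ | j
      · rw [parts_zero_pos hk]
        simp
      · exact absurd rfl hj1
      · apply Finset.sum_eq_zero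
        intro t _
        rw [iteratedFDeriv_coordFn_two_le]
        simp
    · intro h1
      exact absurd (Finset.mem_range.mpr (by omega)) h1

lemma Sm.add_smul' {n : ℕ} {g h : Fn n} (hg : Sm g) (hh : Sm h) (t : ℝ) : Sm (g + t • h) :=
  hg.add (hh.const_smul t)

lemma expand_multilinear {n m : ℕ} (r : ℕ)
    (B : MultilinearMap ℝ (fun _ : Fin (r + 1) => Fn n) (Fn m)) (g h : Fn n) (t : ℝ) :
    B (fun _ => g + t • h) = ∑ s : Finset (Fin (r + 1)),
      t ^ s.card • B (s.piecewise (fun _ => h) (fun _ => g)) := by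
  classical
  have h0 : (fun _ : Fin (r + 1) => g + t • h)
      = (fun _ : Fin (r + 1) => t • h) + (fun _ => g) := by
    funext i
    exact add_comm _ _
  rw [h0, B.map_add_univ]
  refine Finset.sum_congr rfl fun s _ => ?_
  have hp : s.piecewise (fun _ : Fin (r + 1) => t • h) (fun _ => g)
      = s.piecewise (fun i => t • (s.piecewise (fun _ : Fin (r + 1) => h) (fun _ => g)) i)
          (s.piecewise (fun _ => h) (fun _ => g)) := by
    funext i
    by_cases hi : i ∈ s <;> simp [Finset.piecewise, hi]
  rw [hp, B.map_piecewise_smul]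
  simp [Finset.prod_const]

lemma polarize {n m : ℕ} (L Lt : FormalFunctional n m) (r : ℕ)
    (hdiag : ∀ g : Fn n, Sm g → L.ord (r + 1) g = Lt.ord (r + 1) g)
    (g h : Fn n) (hg : Sm g) (hh : Sm h) :
    L.B (r + 1) (Fin.cons h (fun _ => g)) = Lt.B (r + 1) (Fin.cons h (fun _ => g)) := by
  classical
  funext x
  set c : Finset (Fin (r + 1)) → ℝ := fun s =>
    L.B (r + 1) (s.piecewise (fun _ => h) (fun _ => g)) x
      - Lt.B (r + 1) (s.piecewise (fun _ => h) (fun _ => g)) x with hc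
  have hpoly : ∀ t : ℝ, ∑ s : Finset (Fin (r + 1)), c s * t ^ s.card = 0 := by
    intro t
    have h1 := congrFun (hdiag (g + t • h) (Sm.add_smul' hg hh t)) x
    have e1 : L.ord (r + 1) (g + t • h) x = ∑ s : Finset (Fin (r + 1)),
        t ^ s.card * L.B (r + 1) (s.piecewise (fun _ => h) (fun _ => g)) x := by
      have := congrFun (expand_multilinear r (L.B (r + 1)) g h t) x
      simpa [FormalFunctional.ord, Finset.sum_apply, Pi.smul_apply, smul_eq_mul] using this
    have e2 : Lt.ord (r + 1) (g + t • h) x = ∑ s : Finset (Fin (r + 1)),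
        t ^ s.card * Lt.B (r + 1) (s.piecewise (fun _ => h) (fun _ => g)) x := by
      have := congrFun (expand_multilinear r (Lt.B (r + 1)) g h t) x
      simpa [FormalFunctional.ord, Finset.sum_apply, Pi.smul_apply, smul_eq_mul] using this
    have : ∑ s : Finset (Fin (r + 1)), c s * t ^ s.card
        = (∑ s : Finset (Fin (r + 1)),
            t ^ s.card * L.B (r + 1) (s.piecewise (fun _ => h) (fun _ => g)) x)
          - ∑ s : Finset (Fin (r + 1)),
            t ^ s.card * Lt.B (r + 1) (s.piecewise (fun _ => h) (fun _ => g)) x := by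
      rw [← Finset.sum_sub_distrib]
      refine Finset.sum_congr rfl fun s _ => ?_
      simp only [hc]
      ring
    rw [this, ← e1, ← e2, h1, sub_self]
  set p : Polynomial ℝ := ∑ s : Finset (Fin (r + 1)), Polynomial.C (c s) * Polynomial.X ^ s.card
    with hpdef
  have hp0 : p = 0 := by
    apply Polynomial.funext
    intro t
    rw [Polynomial.eval_zero, hpdef, Polynomial.eval_finset_sum]
    rw [← hpoly t]
    refine Finset.sum_congr rfl fun s _ => ?_
    simp
  have hsing : ∀ i : Fin (r + 1), c {i} = c {0} := by
    intro i
    have hswap : (({0} : Finset (Fin (r + 1))).piecewise (fun _ => h) (fun _ => g))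
        ∘ (Equiv.swap (0 : Fin (r + 1)) i)
        = ({i} : Finset (Fin (r + 1))).piecewise (fun _ => h) (fun _ => g) := by
      funext jj
      by_cases hji : jj = i
      · subst hji
        simp [Finset.piecewise, Equiv.swap_apply_right]
      · have hne : Equiv.swap (0 : Fin (r + 1)) i jj ≠ 0 := by
          intro hjeq
          exact hji ((Equiv.swap (0 : Fin (r + 1)) i).injective
            (hjeq.trans (Equiv.swap_apply_right (0 : Fin (r + 1)) i).symm))
        simp [Finset.piecewise, hne, hji]
    have hL := L.symm (r + 1) (Equiv.swap (0 : Fin (r + 1)) i)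
      (({0} : Finset (Fin (r + 1))).piecewise (fun _ => h) (fun _ => g))
    have hLt := Lt.symm (r + 1) (Equiv.swap (0 : Fin (r + 1)) i)
      (({0} : Finset (Fin (r + 1))).piecewise (fun _ => h) (fun _ => g))
    rw [hswap] at hL hLt
    simp only [hc, ← hL, ← hLt]
  have hcard : (Finset.univ.filter fun s : Finset (Fin (r + 1)) => 1 = s.card).card = r + 1 := by
    have heq : (Finset.univ.filter fun s : Finset (Fin (r + 1)) => 1 = s.card)
        = Finset.powersetCard 1 (Finset.univ : Finset (Fin (r + 1))) := by
      rw [Finset.powersetCard_eq_filter, Finset.powerset_univ]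
      apply Finset.filter_congr
      intro s _
      exact eq_comm
    rw [heq, Finset.card_powersetCard]
    simp
  have hc1 : ((r : ℝ) + 1) * c {0} = 0 := by
    have h2 := congrArg (fun q : Polynomial ℝ => q.coeff 1) hp0
    simp only [hpdef, Polynomial.finset_sum_coeff, Polynomial.coeff_C_mul,
      Polynomial.coeff_X_pow, Polynomial.coeff_zero, mul_ite, mul_one, mul_zero] at h2
    rw [← h2]
    have step : ∀ s : Finset (Fin (r + 1)),
        (if 1 = s.card then c s else 0) = (if 1 = s.card then c {0} else 0) := by
      intro s
      by_cases hs : 1 = s.card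
      · obtain ⟨i, rfl⟩ := Finset.card_eq_one.mp hs.symm
        rw [if_pos hs, if_pos hs, hsing i]
      · rw [if_neg hs, if_neg hs]
    rw [Finset.sum_congr rfl fun s _ => step s, ← Finset.sum_filter, Finset.sum_const, hcard,
      nsmul_eq_mul]
    push_cast
    ring
  have hc0 : c {0} = 0 := by
    have hr : ((r : ℝ) + 1) ≠ 0 := by positivity
    exact (mul_eq_zero.mp hc1).resolve_left hr
  have hcons : (({0} : Finset (Fin (r + 1))).piecewise (fun _ => h) (fun _ => g))
      = Fin.cons h (fun _ => g) := by
    funext jj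
    refine Fin.cases ?_ ?_ jj
    · simp [Finset.piecewise]
    · intro i
      simp [Finset.piecewise, (Fin.succ_ne_zero i)]
  rw [← hcons]
  have := hc0
  simp only [hc] at this
  linarith

/-- Let `L` and `L̃` be two formal functionals which are non-linear
homomorphisms, with associated formal maps `K` and `K̃` respectively. If `L` and `L̃`
coincide up to order `k-1` for some `k ≥ 2`, then their formal maps coincide up to
order `k-2`: `K_r(g) = K̃_r(g)` for all smooth `g` and all `0 ≤ r ≤ k-2`. -/
theorem formal_maps_coincide {n m : ℕ} (k : ℕ) (hk : 2 ≤ k)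
    (L Lt : FormalFunctional n m) (K Kt : FormalMap n m)
    (hL : IsNonlinearHomWith L K) (hLt : IsNonlinearHomWith Lt Kt)
    (hcoin : ∀ j ≤ k - 1, ∀ g : Fn n, Sm g → L.ord j g = Lt.ord j g) :
    ∀ r ≤ k - 2, ∀ g : Fn n, Sm g → K.ord r g = Kt.ord r g := by
  intro r hr g hg
  funext x a
  have hh : Sm (coordFn a) := coordFn_smooth a
  have h1 := congrFun (hL g (coordFn a) hg hh r) x
  have h2 := congrFun (hLt g (coordFn a) hg hh r) x
  have hpol := polarize L Lt r (fun G hG => hcoin (r + 1) (by omega) G hG) g (coordFn a) hg hh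
  have key : taylorComp (coordFn a) (fun r' => K.ord r' g) r x
      = taylorComp (coordFn a) (fun r' => Kt.ord r' g) r x := by
    rw [← h1, ← h2, hpol]
  rw [taylorComp_coordFn a (fun r' => K.ord r' g) r x,
    taylorComp_coordFn a (fun r' => Kt.ord r' g) r x] at key
  exact key

end ThickMorphism
end
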